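/- Let 𝒴 be a nonempty finite set, N ≥ 1, and let P be a probability mass function on {0,1}^N × 𝒴. For 1 ≤ i ≤ N, let P(u_i | u_{1:i−1}, y) denote the conditional probability of the i-th coordinate given the first i−1 coordinates and y (defined as 1/2 whenever the conditioning event has probability 0). Let F ⊆ {1,…,N}, and define the probability mass function Q on {0,1}^N × 𝒴 by Q(u_{1:N}, y) = P_Y(y)·∏_{i=1}^N q_i(u_i | u_{1:i−1}, y), where P_Y is the 𝒴-marginal of P, q_i = P(u_i | u_{1:i−1}, y) for i ∉ F, and q_i = 1/2 for i ∈ F. Then the total variation distance between P and Q satisfies (1/2)·∑_{u_{1:N}, y} |P(u_{1:N}, y) − Q(u_{1:N}, y)| ≤ ∑_{i∈F} √((ln 2 / 2)·(1 − H(U_i | U_{1:i−1}, Y))). -/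

import Mathlib

set_option linter.unusedSectionVars false
set_option linter.unusedVariables false


open Real Finset

lemma psi_nonneg {x : ℝ} (hx : 1/2 ≤ x) (hx1 : x < 1) :
    0 ≤ Real.log x - Real.log (1 - x) - 4*x + 2 := by
  set f : ℝ → ℝ := fun x => Real.log x - Real.log (1 - x) - 4*x + 2 with hf
  have key : MonotoneOn f (Set.Ico (1/2 : ℝ) 1) := by
    have hderiv : ∀ x ∈ interior (Set.Ico (1/2 : ℝ) 1),
        HasDerivAt f (1/x + 1/(1-x) - 4) x := by
      intro x hx
      rw [interior_Ico] at hx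
      obtain ⟨h1, h2⟩ := hx
      have hx0 : x ≠ 0 := by nlinarith
      have hx1' : (1:ℝ) - x ≠ 0 := by nlinarith
      have d1 : HasDerivAt Real.log x⁻¹ x := Real.hasDerivAt_log hx0
      have d2 : HasDerivAt (fun y : ℝ => Real.log (1 - y)) (-(1-x)⁻¹) x := by
        have : HasDerivAt (fun y : ℝ => (1:ℝ) - y) (-1) x := by
          simpa using (hasDerivAt_id x).const_sub 1
        exact ((Real.hasDerivAt_log hx1').comp x this).congr_deriv (by ring)
      have d3 : HasDerivAt (fun y : ℝ => 4*y) 4 x := by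
        simpa using (hasDerivAt_id x).const_mul 4
      have := ((d1.sub d2).sub d3).add_const 2
      exact this.congr_deriv (by ring)
    apply monotoneOn_of_deriv_nonneg (convex_Ico _ _)
    · -- continuity
      apply ContinuousOn.add
      apply ContinuousOn.sub
      apply ContinuousOn.sub
      · exact Real.continuousOn_log.mono (by intro x hx; simp at hx ⊢; nlinarith [hx.1])
      · apply Real.continuousOn_log.comp (by fun_prop)
        intro x hx
        simp at hx ⊢
        nlinarith [hx.2]
      · fun_prop
      · fun_prop
    · intro x hx
      exact (hderiv x hx).differentiableAt.differentiableWithinAt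
    · intro x hx
      rw [(hderiv x hx).deriv]
      rw [interior_Ico] at hx
      obtain ⟨h1, h2⟩ := hx
      have h0 : 0 < x := by linarith
      have h1' : 0 < 1 - x := by linarith
      rw [div_add_div _ _ (ne_of_gt h0) (ne_of_gt h1'), le_sub_iff_add_le]
      rw [le_div_iff₀ (by positivity)]
      nlinarith
  have := key (by constructor <;> norm_num) ⟨hx, hx1⟩ hx
  have hval : f (1/2) = 0 := by
    norm_num [hf]
  linarith [this, hval.symm.le]

lemma pinsker_half (p : ℝ) (h1 : 1/2 ≤ p) (h2 : p ≤ 1) :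
    binEntropy p + 2*(p - 1/2)^2 ≤ Real.log 2 := by
  set φ : ℝ → ℝ := fun p => Real.log 2 - binEntropy p - 2*(p-1/2)^2 with hφ
  have key : MonotoneOn φ (Set.Icc (1/2 : ℝ) 1) := by
    have hderiv : ∀ x ∈ interior (Set.Icc (1/2 : ℝ) 1),
        HasDerivAt φ (Real.log x - Real.log (1-x) - 4*x + 2) x := by
      intro x hx
      rw [interior_Icc] at hx
      obtain ⟨ha, hb⟩ := hx
      have hx0 : x ≠ 0 := by nlinarith
      have hx1' : x ≠ 1 := ne_of_lt hb
      have d1 : HasDerivAt binEntropy (Real.log (1 - x) - Real.log x) x :=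
        Real.hasDerivAt_binEntropy hx0 hx1'
      have d2 : HasDerivAt (fun y : ℝ => 2*(y-1/2)^2) (4*(x-1/2)) x := by
        have : HasDerivAt (fun y : ℝ => (y-1/2)^2) (2*(x-1/2)) x := by
          exact (((hasDerivAt_id x).sub_const (1/2)).pow 2).congr_deriv (by simp)
        have := this.const_mul 2
        exact this.congr_deriv (by ring)
      have h3 := (d1.add d2).const_sub (Real.log 2)
      have heq : φ = fun x => Real.log 2 - (binEntropy x + 2*(x-1/2)^2) := by
        funext z; simp only [hφ]; ring
      rw [heq]
      exact h3.congr_deriv (by ring)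
    apply monotoneOn_of_deriv_nonneg (convex_Icc _ _)
    · have : Continuous φ := by
        have := Real.binEntropy_continuous
        fun_prop
      exact this.continuousOn
    · intro x hx
      exact (hderiv x hx).differentiableAt.differentiableWithinAt
    · intro x hx
      rw [(hderiv x hx).deriv]
      rw [interior_Icc] at hx
      exact psi_nonneg hx.1.le hx.2
  have := key (by constructor <;> norm_num) ⟨h1, h2⟩ h1
  have hval : φ (1/2) = 0 := by
    have : ((1:ℝ)/2) = 2⁻¹ := by norm_num
    simp [hφ, this, Real.binEntropy_two_inv]
  simp only [hφ] at this hval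
  linarith

lemma pinsker_pt (p : ℝ) (h1 : 0 ≤ p) (h2 : p ≤ 1) :
    binEntropy p + 2*(p - 1/2)^2 ≤ Real.log 2 := by
  rcases le_or_gt (1/2) p with h | h
  · exact pinsker_half p h h2
  · have := pinsker_half (1-p) (by linarith) (by linarith)
    rw [Real.binEntropy_one_sub] at this
    nlinarith

section

variable {𝒴 : Type*} [Fintype 𝒴] {N : ℕ}

/-- Probability, under the joint pmf `P` on `{0,1}^N × 𝒴`, of observing `y`
together with the prefix `u_{1:i−1}` (the coordinates of `u` strictly before `i`). -/
noncomputable def prefixProb (P : (Fin N → Bool) × 𝒴 → ℝ) (i : Fin N)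
    (u : Fin N → Bool) (y : 𝒴) : ℝ :=
  ∑ v ∈ Finset.univ.filter (fun v : Fin N → Bool => ∀ j, j < i → v j = u j), P (v, y)

/-- Probability, under `P`, of observing `y` together with the prefix `u_{1:i}`
(the coordinates of `u` up to and including `i`). -/
noncomputable def prefixProb' (P : (Fin N → Bool) × 𝒴 → ℝ) (i : Fin N)
    (u : Fin N → Bool) (y : 𝒴) : ℝ :=
  ∑ v ∈ Finset.univ.filter (fun v : Fin N → Bool => ∀ j, j ≤ i → v j = u j), P (v, y)

/-- The conditional probability `P(u_i | u_{1:i−1}, y)`, taken to be `1/2` whenever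
the conditioning event has probability `0`. -/
noncomputable def condProb (P : (Fin N → Bool) × 𝒴 → ℝ) (i : Fin N)
    (u : Fin N → Bool) (y : 𝒴) : ℝ :=
  if prefixProb P i u y = 0 then 1 / 2 else prefixProb' P i u y / prefixProb P i u y

/-- The conditional entropy (in bits) `H(U_i | U_{1:i−1}, Y)` of the `i`-th coordinate
given the previous coordinates and `Y`, under the joint pmf `P`; terms of probability
zero contribute `0`. -/
noncomputable def condEntropy (P : (Fin N → Bool) × 𝒴 → ℝ) (i : Fin N) : ℝ :=
  -∑ u : Fin N → Bool, ∑ y : 𝒴, P (u, y) * Real.logb 2 (condProb P i u y)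

/-- The distribution `Q` obtained from `P` by replacing, for each index `i` in the
frozen set `F`, the successive conditional `P(u_i | u_{1:i−1}, y)` by the uniform
conditional `1/2`. -/
noncomputable def Qdist (P : (Fin N → Bool) × 𝒴 → ℝ) (F : Finset (Fin N))
    (u : Fin N → Bool) (y : 𝒴) : ℝ :=
  (∑ v : Fin N → Bool, P (v, y))
    * ∏ i : Fin N, (if i ∈ F then 1 / 2 else condProb P i u y)

variable (P : (Fin N → Bool) × 𝒴 → ℝ) (i : Fin N) (u : Fin N → Bool) (y : 𝒴)

lemma prefixProb_nonneg (hP0 : ∀ p, 0 ≤ P p) : 0 ≤ prefixProb P i u y :=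
  Finset.sum_nonneg fun v _ => hP0 _

lemma prefixProb'_nonneg (hP0 : ∀ p, 0 ≤ P p) : 0 ≤ prefixProb' P i u y :=
  Finset.sum_nonneg fun v _ => hP0 _

lemma prefixProb'_le (hP0 : ∀ p, 0 ≤ P p) : prefixProb' P i u y ≤ prefixProb P i u y := by
  apply Finset.sum_le_sum_of_subset_of_nonneg
  · intro v hv
    simp only [Finset.mem_filter, Finset.mem_univ, true_and] at hv ⊢
    exact fun j hj => hv j hj.le
  · exact fun v _ _ => hP0 _

lemma condProb_nonneg (hP0 : ∀ p, 0 ≤ P p) : 0 ≤ condProb P i u y := by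
  unfold condProb
  split
  · norm_num
  · exact div_nonneg (prefixProb'_nonneg P i u y hP0)
      (prefixProb_nonneg P i u y hP0)

lemma condProb_le_one (hP0 : ∀ p, 0 ≤ P p) : condProb P i u y ≤ 1 := by
  unfold condProb
  split_ifs with h
  · norm_num
  · have hpos : 0 < prefixProb P i u y :=
      lt_of_le_of_ne (prefixProb_nonneg P i u y hP0) (Ne.symm h)
    rw [div_le_one hpos]
    exact prefixProb'_le P i u y hP0

lemma prefixProb'_eq_mul (hP0 : ∀ p, 0 ≤ P p) :
    prefixProb' P i u y = prefixProb P i u y * condProb P i u y := by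
  unfold condProb
  split_ifs with h
  · rw [h, zero_mul]
    have h1 := prefixProb'_le P i u y hP0
    have h2 := prefixProb'_nonneg P i u y hP0
    linarith [h ▸ h1]
  · field_simp

lemma prefixProb_congr {u' : Fin N → Bool} (h : ∀ j, j < i → u j = u' j) :
    prefixProb P i u y = prefixProb P i u' y := by
  unfold prefixProb
  congr 1
  apply Finset.filter_congr
  intro v _
  constructor <;> intro hv j hj
  · rw [hv j hj, ← h j hj]
  · rw [hv j hj, h j hj]

lemma prefixProb'_congr {u' : Fin N → Bool} (h : ∀ j, j ≤ i → u j = u' j) :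
    prefixProb' P i u y = prefixProb' P i u' y := by
  unfold prefixProb'
  congr 1
  apply Finset.filter_congr
  intro v _
  constructor <;> intro hv j hj
  · rw [hv j hj, ← h j hj]
  · rw [hv j hj, h j hj]

lemma condProb_congr {u' : Fin N → Bool} (h : ∀ j, j ≤ i → u j = u' j) :
    condProb P i u y = condProb P i u' y := by
  unfold condProb
  rw [prefixProb_congr P i u y (fun j hj => h j hj.le),
    prefixProb'_congr P i u y h]

lemma prefixProb_update (b : Bool) :
    prefixProb P i (Function.update u i b) y = prefixProb P i u y := by
  apply prefixProb_congr
  intro j hj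
  rw [Function.update_of_ne (ne_of_lt hj)]

lemma filter_prefix_split (b : Bool) :
    (Finset.univ.filter (fun v : Fin N → Bool => ∀ j, j < i → v j = u j)).filter
        (fun v => v i = b)
      = Finset.univ.filter
          (fun v : Fin N → Bool => ∀ j, j ≤ i → v j = Function.update u i b j) := by
  ext v
  simp only [Finset.mem_filter, Finset.mem_univ, true_and]
  constructor
  · rintro ⟨h1, h2⟩ j hj
    rcases lt_or_eq_of_le hj with hj' | hj'
    · rw [Function.update_of_ne (ne_of_lt hj'), h1 j hj']
    · subst hj'
      rw [Function.update_self, h2]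
  · intro h
    constructor
    · intro j hj
      have := h j hj.le
      rwa [Function.update_of_ne (ne_of_lt hj)] at this
    · have := h i le_rfl
      rwa [Function.update_self] at this

lemma prefixProb'_split :
    prefixProb' P i (Function.update u i true) y
      + prefixProb' P i (Function.update u i false) y = prefixProb P i u y := by
  unfold prefixProb prefixProb'
  rw [← filter_prefix_split, ← filter_prefix_split]
  rw [← Finset.sum_filter_add_sum_filter_not
    (Finset.univ.filter (fun v : Fin N → Bool => ∀ j, j < i → v j = u j))
    (fun v => v i = true)]
  congr 1
  apply Finset.sum_congr _ (fun _ _ => rfl)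
  congr 1
  funext v
  simp [Bool.not_eq_true]

lemma condProb_bit_sum (hP0 : ∀ p, 0 ≤ P p) :
    condProb P i (Function.update u i true) y
      + condProb P i (Function.update u i false) y = 1 := by
  unfold condProb
  rw [prefixProb_update, prefixProb_update]
  split_ifs with h
  · norm_num
  · rw [← add_div, prefixProb'_split]
    exact div_self h

lemma condProb_flip_sum (hP0 : ∀ p, 0 ≤ P p) :
    condProb P i u y + condProb P i (Function.update u i (!(u i))) y = 1 := by
  have h := condProb_bit_sum P i u y hP0
  cases hb : u i
  · have hu : Function.update u i false = u := by
      rw [← hb]; exact Function.update_eq_self i u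
    rw [hu] at h
    simp only [Bool.not_false]
    linarith
  · have hu : Function.update u i true = u := by
      rw [← hb]; exact Function.update_eq_self i u
    rw [hu] at h
    simp only [Bool.not_true]
    linarith

lemma chain (hP0 : ∀ p, 0 ≤ P p) :
    ∀ n (i : Fin N), (i : ℕ) = n →
      prefixProb P i u y = (∑ v, P (v, y)) * ∏ j ∈ Finset.Iio i, condProb P j u y := by
  intro n
  induction n with
  | zero =>
    intro i hi
    have h1 : Finset.Iio i = ∅ := by
      ext j
      simp only [Finset.mem_Iio, Finset.notMem_empty, iff_false]
      rw [Fin.lt_def, hi]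
      omega
    have h2 : (Finset.univ.filter (fun v : Fin N → Bool => ∀ j, j < i → v j = u j))
        = Finset.univ := by
      apply Finset.filter_true_of_mem
      intro v _ j hj
      rw [Fin.lt_def, hi] at hj
      omega
    rw [h1, Finset.prod_empty, mul_one]
    unfold prefixProb
    rw [h2]
  | succ m ih =>
    intro i hi
    have hk : m < N := by omega
    set k : Fin N := ⟨m, hk⟩ with hkdef
    have h1 : prefixProb P i u y = prefixProb' P k u y := by
      unfold prefixProb prefixProb'
      congr 1
      apply Finset.filter_congr
      intro v _
      constructor <;> intro hv j hj
      · exact hv j (by rw [Fin.lt_def, hi]; rw [Fin.le_def] at hj; simp only [hkdef] at hj; omega)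
      · exact hv j (by rw [Fin.le_def]; rw [Fin.lt_def, hi] at hj; simp only [hkdef]; omega)
    have h2 : Finset.Iio i = insert k (Finset.Iio k) := by
      ext j
      simp only [Finset.mem_Iio, Finset.mem_insert]
      rw [Fin.lt_def, Fin.lt_def, hi, Fin.ext_iff]
      simp only [hkdef]
      omega
    rw [h1, prefixProb'_eq_mul P k u y hP0, ih k rfl, h2,
      Finset.prod_insert (by simp)]
    ring

lemma prefixProb'_last (hN : 1 ≤ N) (hlast : (i : ℕ) = N - 1) :
    prefixProb' P i u y = P (u, y) := by
  unfold prefixProb'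
  have : (Finset.univ.filter (fun v : Fin N → Bool => ∀ j, j ≤ i → v j = u j)) = {u} := by
    ext v
    simp only [Finset.mem_filter, Finset.mem_univ, true_and, Finset.mem_singleton]
    constructor
    · intro h
      funext j
      exact h j (by rw [Fin.le_def, hlast]; omega)
    · rintro rfl j _
      rfl
  rw [this, Finset.sum_singleton]

lemma P_eq_chain (hN : 1 ≤ N) (hP0 : ∀ p, 0 ≤ P p) :
    P (u, y) = (∑ v, P (v, y)) * ∏ j, condProb P j u y := by
  have hlast : N - 1 < N := by omega
  set l : Fin N := ⟨N - 1, hlast⟩ with hl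
  have h1 : Finset.univ = insert l (Finset.Iio l) := by
    ext j
    simp only [Finset.mem_univ, Finset.mem_insert, Finset.mem_Iio, true_iff]
    rw [Fin.ext_iff, Fin.lt_def]
    simp only [hl]
    omega
  rw [← prefixProb'_last P l u y hN (by simp [hl]),
    prefixProb'_eq_mul P l u y hP0, chain P u y hP0 (N-1) l (by simp [hl]),
    h1, Finset.prod_insert (by simp)]
  ring

lemma Qdist_empty (hN : 1 ≤ N) (hP0 : ∀ p, 0 ≤ P p) :
    Qdist P ∅ u y = P (u, y) := by
  unfold Qdist
  simp only [Finset.notMem_empty, if_false]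
  exact (P_eq_chain P u y hN hP0).symm

lemma card_filter_agree (p : Fin N → Prop) [DecidablePred p] (v : Fin N → Bool) :
    (Finset.univ.filter (fun u : Fin N → Bool => ∀ j, p j → u j = v j)).card
      = 2 ^ (Fintype.card {j : Fin N // ¬ p j}) := by
  rw [← Fintype.card_subtype]
  have e : {u : Fin N → Bool // ∀ j, p j → u j = v j} ≃ ({j : Fin N // ¬ p j} → Bool) :=
    { toFun := fun u j => u.1 j.1
      invFun := fun f => ⟨fun j => if h : p j then v j else f ⟨j, h⟩,
        fun j hj => dif_pos hj⟩
      left_inv := fun u => Subtype.ext (funext fun j => by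
        by_cases h : p j
        · simp [h, u.2 j h]
        · simp [h])
      right_inv := fun f => funext fun j => by simp [j.2] }
  rw [Fintype.card_congr e, Fintype.card_fun, Fintype.card_bool]

lemma card_not_lt : Fintype.card {j : Fin N // ¬ j < i} = N - (i : ℕ) := by
  rw [Fintype.card_subtype]
  have : Finset.univ.filter (fun j : Fin N => ¬ j < i) = Finset.Ici i := by
    ext j
    simp [not_lt]
  rw [this, Fin.card_Ici]

lemma card_not_le : Fintype.card {j : Fin N // ¬ j ≤ i} = N - 1 - (i : ℕ) := by
  rw [Fintype.card_subtype]
  have : Finset.univ.filter (fun j : Fin N => ¬ j ≤ i) = Finset.Ioi i := by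
    ext j
    simp [not_le]
  rw [this, Fin.card_Ioi]

lemma card_agree_lt (v : Fin N → Bool) :
    (Finset.univ.filter (fun u : Fin N → Bool => ∀ j, j < i → u j = v j)).card
      = 2 ^ (N - (i : ℕ)) := by
  rw [card_filter_agree (fun j => j < i) v, card_not_lt]

lemma card_agree_le (v : Fin N → Bool) :
    (Finset.univ.filter (fun u : Fin N → Bool => ∀ j, j ≤ i → u j = v j)).card
      = 2 ^ (N - 1 - (i : ℕ)) := by
  rw [card_filter_agree (fun j => j ≤ i) v, card_not_le]

lemma swap_sum (R : (Fin N → Bool) → (Fin N → Bool) → Prop)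
    [∀ u v, Decidable (R u v)] (φ : (Fin N → Bool) → ℝ) :
    ∑ u : Fin N → Bool, ∑ v ∈ Finset.univ.filter (fun v => R u v), φ v
      = ∑ v : Fin N → Bool, ((Finset.univ.filter (fun u => R u v)).card : ℝ) * φ v := by
  simp_rw [Finset.sum_filter]
  rw [Finset.sum_comm]
  apply Finset.sum_congr rfl
  intro v _
  rw [← Finset.sum_filter, Finset.sum_const, nsmul_eq_mul]

lemma group_le (Ffun G : (Fin N → Bool) → ℝ)
    (hG : ∀ u v : Fin N → Bool, (∀ j, j ≤ i → u j = v j) → G u = G v) :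
    ∑ u : Fin N → Bool,
        (∑ v ∈ Finset.univ.filter (fun v => ∀ j, j ≤ i → v j = u j), Ffun v) * G u
      = 2 ^ (N - 1 - (i : ℕ)) * ∑ v : Fin N → Bool, Ffun v * G v := by
  have step1 : ∀ u : Fin N → Bool,
      (∑ v ∈ Finset.univ.filter (fun v => ∀ j, j ≤ i → v j = u j), Ffun v) * G u
        = ∑ v ∈ Finset.univ.filter (fun v => ∀ j, j ≤ i → v j = u j), Ffun v * G v := by
    intro u
    rw [Finset.sum_mul]
    apply Finset.sum_congr rfl
    intro v hv
    simp only [Finset.mem_filter, Finset.mem_univ, true_and] at hv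
    rw [hG u v (fun j hj => (hv j hj).symm)]
  simp_rw [step1]
  rw [swap_sum (fun u v => ∀ j, j ≤ i → v j = u j) (fun v => Ffun v * G v)]
  rw [Finset.mul_sum]
  apply Finset.sum_congr rfl
  intro v _
  have : (Finset.univ.filter (fun u : Fin N → Bool => ∀ j, j ≤ i → v j = u j)).card
      = 2 ^ (N - 1 - (i : ℕ)) := by
    rw [← card_agree_le i v]
    congr 1
    apply Finset.filter_congr
    intro u _
    constructor <;> intro h j hj
    · exact (h j hj).symm
    · exact (h j hj).symm
  rw [this]
  push_cast
  ring

lemma group_lt (Ffun G : (Fin N → Bool) → ℝ)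
    (hG : ∀ u v : Fin N → Bool, (∀ j, j < i → u j = v j) → G u = G v) :
    ∑ u : Fin N → Bool,
        (∑ v ∈ Finset.univ.filter (fun v => ∀ j, j < i → v j = u j), Ffun v) * G u
      = 2 ^ (N - (i : ℕ)) * ∑ v : Fin N → Bool, Ffun v * G v := by
  have step1 : ∀ u : Fin N → Bool,
      (∑ v ∈ Finset.univ.filter (fun v => ∀ j, j < i → v j = u j), Ffun v) * G u
        = ∑ v ∈ Finset.univ.filter (fun v => ∀ j, j < i → v j = u j), Ffun v * G v := by
    intro u
    rw [Finset.sum_mul]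
    apply Finset.sum_congr rfl
    intro v hv
    simp only [Finset.mem_filter, Finset.mem_univ, true_and] at hv
    rw [hG u v (fun j hj => (hv j hj).symm)]
  simp_rw [step1]
  rw [swap_sum (fun u v => ∀ j, j < i → v j = u j) (fun v => Ffun v * G v)]
  rw [Finset.mul_sum]
  apply Finset.sum_congr rfl
  intro v _
  have : (Finset.univ.filter (fun u : Fin N → Bool => ∀ j, j < i → v j = u j)).card
      = 2 ^ (N - (i : ℕ)) := by
    rw [← card_agree_lt i v]
    congr 1
    apply Finset.filter_congr
    intro u _
    constructor <;> intro h j hj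
    · exact (h j hj).symm
    · exact (h j hj).symm
  rw [this]
  push_cast
  ring

lemma tail_sum (f : Fin N → (Fin N → Bool) → ℝ)
    (hdep : ∀ (j : Fin N) (u v : Fin N → Bool), (∀ j', j' ≤ j → u j' = v j') → f j u = f j v)
    (hsum : ∀ (j : Fin N) (u : Fin N → Bool),
      f j (Function.update u j true) + f j (Function.update u j false) = 1) :
    ∀ d k, k + d = N → ∀ u : Fin N → Bool,
      ∑ v ∈ Finset.univ.filter (fun v : Fin N → Bool => ∀ j : Fin N, (j : ℕ) < k → v j = u j),
        ∏ j ∈ Finset.univ.filter (fun j : Fin N => k ≤ (j : ℕ)), f j v = 1 := by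
  intro d
  induction d with
  | zero =>
    intro k hk u
    have h1 : Finset.univ.filter (fun v : Fin N → Bool => ∀ j : Fin N, (j : ℕ) < k → v j = u j)
        = {u} := by
      ext v
      simp only [Finset.mem_filter, Finset.mem_univ, true_and, Finset.mem_singleton]
      constructor
      · intro h
        funext j
        exact h j (by have := j.isLt; omega)
      · rintro rfl j _
        rfl
    have h2 : Finset.univ.filter (fun j : Fin N => k ≤ (j : ℕ)) = ∅ := by
      ext j
      simp only [Finset.mem_filter, Finset.mem_univ, true_and, Finset.notMem_empty, iff_false]
      have := j.isLt
      omega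
    rw [h1, h2, Finset.sum_singleton, Finset.prod_empty]
  | succ d ih =>
    intro k hk u
    have hkN : k < N := by omega
    set i : Fin N := ⟨k, hkN⟩ with hidef
    have hmem : ∀ (b : Bool) (v : Fin N → Bool),
        (∀ j : Fin N, (j : ℕ) < k + 1 → v j = Function.update u i b j)
          ↔ (∀ j : Fin N, (j : ℕ) < k → v j = u j) ∧ v i = b := by
      intro b v
      constructor
      · intro h
        refine ⟨fun j hj => ?_, ?_⟩
        · have := h j (by omega)
          rwa [Function.update_of_ne (by simp only [ne_eq, Fin.ext_iff, hidef]; omega)] at this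
        · have := h i (by simp [hidef])
          rwa [Function.update_self] at this
      · rintro ⟨h1, h2⟩ j hj
        by_cases hji : j = i
        · subst hji
          rw [Function.update_self, h2]
        · rw [Function.update_of_ne hji]
          have : (j : ℕ) ≠ k := by
            intro hc
            exact hji (by rw [Fin.ext_iff]; simp [hidef, hc])
          exact h1 j (by omega)
    have hunion : Finset.univ.filter (fun v : Fin N → Bool => ∀ j : Fin N, (j : ℕ) < k → v j = u j)
        = (Finset.univ.filter (fun v : Fin N → Bool =>
            ∀ j : Fin N, (j : ℕ) < k + 1 → v j = Function.update u i true j))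
          ∪ (Finset.univ.filter (fun v : Fin N → Bool =>
            ∀ j : Fin N, (j : ℕ) < k + 1 → v j = Function.update u i false j)) := by
      ext v
      simp only [Finset.mem_union, Finset.mem_filter, Finset.mem_univ, true_and]
      rw [hmem true v, hmem false v]
      constructor
      · intro h
        cases hb : v i
        · exact Or.inr ⟨h, rfl⟩
        · exact Or.inl ⟨h, rfl⟩
      · rintro (⟨h, _⟩ | ⟨h, _⟩) <;> exact h
    have hdisj : Disjoint
        (Finset.univ.filter (fun v : Fin N → Bool =>
          ∀ j : Fin N, (j : ℕ) < k + 1 → v j = Function.update u i true j))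
        (Finset.univ.filter (fun v : Fin N → Bool =>
          ∀ j : Fin N, (j : ℕ) < k + 1 → v j = Function.update u i false j)) := by
      rw [Finset.disjoint_left]
      intro v hv1 hv2
      simp only [Finset.mem_filter, Finset.mem_univ, true_and] at hv1 hv2
      have h1 := ((hmem true v).1 hv1).2
      have h2 := ((hmem false v).1 hv2).2
      rw [h1] at h2
      exact absurd h2 (by simp)
    have hins : Finset.univ.filter (fun j : Fin N => k ≤ (j : ℕ))
        = insert i (Finset.univ.filter (fun j : Fin N => k + 1 ≤ (j : ℕ))) := by
      ext j
      simp only [Finset.mem_filter, Finset.mem_univ, true_and, Finset.mem_insert]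
      rw [Fin.ext_iff]
      simp only [hidef]
      omega
    have hnotmem : i ∉ Finset.univ.filter (fun j : Fin N => k + 1 ≤ (j : ℕ)) := by
      simp [hidef]
    have hpull : ∀ b : Bool,
        ∑ v ∈ Finset.univ.filter (fun v : Fin N → Bool =>
            ∀ j : Fin N, (j : ℕ) < k + 1 → v j = Function.update u i b j),
          ∏ j ∈ Finset.univ.filter (fun j : Fin N => k ≤ (j : ℕ)), f j v
        = f i (Function.update u i b) := by
      intro b
      have : ∀ v ∈ Finset.univ.filter (fun v : Fin N → Bool =>
            ∀ j : Fin N, (j : ℕ) < k + 1 → v j = Function.update u i b j),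
          ∏ j ∈ Finset.univ.filter (fun j : Fin N => k ≤ (j : ℕ)), f j v
            = f i (Function.update u i b)
              * ∏ j ∈ Finset.univ.filter (fun j : Fin N => k + 1 ≤ (j : ℕ)), f j v := by
        intro v hv
        simp only [Finset.mem_filter, Finset.mem_univ, true_and] at hv
        rw [hins, Finset.prod_insert hnotmem]
        congr 1
        apply hdep
        intro j' hj'
        exact hv j' (by rw [Fin.le_def] at hj'; simp only [hidef] at hj'; omega)
      rw [Finset.sum_congr rfl this, ← Finset.mul_sum,
        ih (k+1) (by omega) (Function.update u i b), mul_one]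
    rw [hunion, Finset.sum_union hdisj, hpull true, hpull false, hsum]

lemma erase_eq_Iio_union_Ioi :
    (Finset.univ : Finset (Fin N)).erase i = Finset.Iio i ∪ Finset.Ioi i := by
  ext j
  simp only [Finset.mem_erase, Finset.mem_univ, and_true, Finset.mem_union,
    Finset.mem_Iio, Finset.mem_Ioi]
  exact ne_iff_lt_or_gt

lemma disjoint_Iio_Ioi' : Disjoint (Finset.Iio i) (Finset.Ioi i) := by
  rw [Finset.disjoint_left]
  intro j hj1 hj2
  simp only [Finset.mem_Iio] at hj1
  simp only [Finset.mem_Ioi] at hj2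
  exact absurd (hj1.trans hj2) (lt_irrefl j)

lemma collapse (hP0 : ∀ p, 0 ≤ P p) (S : Finset (Fin N)) (hS : ∀ j ∈ S, i < j)
    (G : (Fin N → Bool) → ℝ)
    (hG : ∀ u v : Fin N → Bool, (∀ j, j ≤ i → u j = v j) → G u = G v) :
    ∑ u : Fin N → Bool, (∏ j ∈ Finset.Iio i, condProb P j u y) * G u
      = 2 ^ (N - 1 - (i : ℕ)) *
        ∑ u : Fin N → Bool,
          (∏ j ∈ Finset.univ.erase i,
            (if j ∈ S then (1:ℝ)/2 else condProb P j u y)) * G u := by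
  set fS : Fin N → (Fin N → Bool) → ℝ :=
    fun j u => if j ∈ S then (1:ℝ)/2 else condProb P j u y with hfS
  have hdep : ∀ (j : Fin N) (u v : Fin N → Bool),
      (∀ j', j' ≤ j → u j' = v j') → fS j u = fS j v := by
    intro j u v h
    simp only [hfS]
    split_ifs
    · rfl
    · exact condProb_congr P j u y h
  have hsum : ∀ (j : Fin N) (u : Fin N → Bool),
      fS j (Function.update u j true) + fS j (Function.update u j false) = 1 := by
    intro j u
    simp only [hfS]
    split_ifs
    · norm_num
    · exact condProb_bit_sum P j u y hP0
  have htail : ∀ u : Fin N → Bool,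
      ∑ v ∈ Finset.univ.filter (fun v => ∀ j, j ≤ i → v j = u j),
        ∏ j ∈ Finset.Ioi i, fS j v = 1 := by
    intro u
    have h0 := tail_sum fS hdep hsum (N - ((i : ℕ) + 1)) ((i : ℕ) + 1)
      (by have := i.isLt; omega) u
    have h1 : Finset.univ.filter
          (fun v : Fin N → Bool => ∀ j : Fin N, (j : ℕ) < (i : ℕ) + 1 → v j = u j)
        = Finset.univ.filter (fun v : Fin N → Bool => ∀ j, j ≤ i → v j = u j) := by
      apply Finset.filter_congr
      intro v _
      constructor <;> intro h j hj
      · exact h j (by rw [Fin.le_def] at hj; omega)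
      · exact h j (by rw [Fin.le_def]; omega)
    have h2 : Finset.univ.filter (fun j : Fin N => (i : ℕ) + 1 ≤ (j : ℕ)) = Finset.Ioi i := by
      ext j
      simp only [Finset.mem_filter, Finset.mem_univ, true_and, Finset.mem_Ioi]
      rw [Fin.lt_def]
      omega
    rw [h1, h2] at h0
    exact h0
  set A : (Fin N → Bool) → ℝ := fun u => (∏ j ∈ Finset.Iio i, condProb P j u y) * G u with hA
  have hAdep : ∀ u v : Fin N → Bool, (∀ j, j ≤ i → u j = v j) → A u = A v := by
    intro u v h
    simp only [hA]
    rw [hG u v h]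
    congr 1
    apply Finset.prod_congr rfl
    intro j hj
    simp only [Finset.mem_Iio] at hj
    exact condProb_congr P j u y (fun j' hj' => h j' (hj'.trans hj.le))
  set T : (Fin N → Bool) → ℝ := fun v => ∏ j ∈ Finset.Ioi i, fS j v with hT
  have key := group_le i T A hAdep
  have lhs_eq : ∑ u : Fin N → Bool,
      (∑ v ∈ Finset.univ.filter (fun v => ∀ j, j ≤ i → v j = u j), T v) * A u
        = ∑ u : Fin N → Bool, A u := by
    apply Finset.sum_congr rfl
    intro u _
    rw [htail u, one_mul]
  rw [lhs_eq] at key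
  have rhs_eq : ∀ v : Fin N → Bool, T v * A v
      = (∏ j ∈ Finset.univ.erase i,
          (if j ∈ S then (1:ℝ)/2 else condProb P j v y)) * G v := by
    intro v
    rw [erase_eq_Iio_union_Ioi, Finset.prod_union (disjoint_Iio_Ioi' i)]
    have : ∏ j ∈ Finset.Iio i, (if j ∈ S then (1:ℝ)/2 else condProb P j v y)
        = ∏ j ∈ Finset.Iio i, condProb P j v y := by
      apply Finset.prod_congr rfl
      intro j hj
      simp only [Finset.mem_Iio] at hj
      rw [if_neg]
      intro hjS
      exact absurd (hS j hjS) (not_lt.mpr hj.le)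
    rw [this]
    simp only [hT, hA, hfS]
    ring
  simp only [rhs_eq] at key
  exact key

lemma weight_total (hP1 : ∑ p : (Fin N → Bool) × 𝒴, P p = 1) :
    ∑ u : Fin N → Bool, ∑ y : 𝒴, prefixProb P i u y = 2 ^ (N - (i : ℕ)) := by
  rw [Finset.sum_comm]
  have : ∀ y : 𝒴, ∑ u : Fin N → Bool, prefixProb P i u y
      = 2 ^ (N - (i : ℕ)) * ∑ v : Fin N → Bool, P (v, y) := by
    intro y
    have := group_lt i (fun v => P (v, y)) (fun _ => (1:ℝ)) (fun _ _ _ => rfl)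
    simpa [prefixProb] using this
  simp_rw [this]
  rw [← Finset.mul_sum]
  have : ∑ y : 𝒴, ∑ v : Fin N → Bool, P (v, y) = 1 := by
    rw [← hP1, Fintype.sum_prod_type]
    exact Finset.sum_comm
  rw [this, mul_one]

lemma binEntropy_div_log_two (p : ℝ) :
    1 - binEntropy p / Real.log 2
      = 1 + (p * Real.logb 2 p + (1 - p) * Real.logb 2 (1 - p)) := by
  have h2 : Real.log 2 ≠ 0 := ne_of_gt (Real.log_pos (by norm_num))
  rw [Real.binEntropy, Real.log_inv, Real.log_inv, Real.logb, Real.logb]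
  field_simp
  ring

lemma flip_involutive : Function.Involutive
    (fun u : Fin N → Bool => Function.update u i (!(u i))) := by
  intro u
  simp only [Function.update_self]
  rw [Bool.not_not, Function.update_idem, Function.update_eq_self]

lemma prefixProb_flip :
    prefixProb P i (Function.update u i (!(u i))) y = prefixProb P i u y := by
  apply prefixProb_congr
  intro j hj
  rw [Function.update_of_ne (ne_of_lt hj)]

lemma entropy_id (hP0 : ∀ p, 0 ≤ P p) (hP1 : ∑ p : (Fin N → Bool) × 𝒴, P p = 1) :
    ∑ u : Fin N → Bool, ∑ y : 𝒴,
        prefixProb P i u y * (1 - binEntropy (condProb P i u y) / Real.log 2)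
      = 2 ^ (N - (i : ℕ)) * (1 - condEntropy P i) := by
  have hsplit : ∀ (u : Fin N → Bool) (y : 𝒴),
      prefixProb P i u y * (1 - binEntropy (condProb P i u y) / Real.log 2)
        = prefixProb P i u y
          + prefixProb P i u y * (condProb P i u y * Real.logb 2 (condProb P i u y))
          + prefixProb P i u y * ((1 - condProb P i u y)
              * Real.logb 2 (1 - condProb P i u y)) := by
    intro u y
    rw [binEntropy_div_log_two]
    ring
  simp_rw [hsplit, Finset.sum_add_distrib]
  rw [weight_total P i hP1]
  -- T1: the p * logb p part
  have hT1 : ∑ u : Fin N → Bool, ∑ y : 𝒴,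
      prefixProb P i u y * (condProb P i u y * Real.logb 2 (condProb P i u y))
        = 2 ^ (N - 1 - (i : ℕ)) * (- condEntropy P i) := by
    rw [Finset.sum_comm]
    have hy : ∀ y : 𝒴, ∑ u : Fin N → Bool,
        prefixProb P i u y * (condProb P i u y * Real.logb 2 (condProb P i u y))
          = 2 ^ (N - 1 - (i : ℕ))
            * ∑ v : Fin N → Bool, P (v, y) * Real.logb 2 (condProb P i v y) := by
      intro y
      have hpt : ∀ u : Fin N → Bool,
          prefixProb P i u y * (condProb P i u y * Real.logb 2 (condProb P i u y))
            = prefixProb' P i u y * Real.logb 2 (condProb P i u y) := by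
        intro u
        rw [prefixProb'_eq_mul P i u y hP0]
        ring
      simp_rw [hpt]
      have := group_le i (fun v => P (v, y))
        (fun u => Real.logb 2 (condProb P i u y))
        (fun u v h => by
          show Real.logb 2 (condProb P i u y) = Real.logb 2 (condProb P i v y)
          rw [condProb_congr P i u y h])
      simpa [prefixProb'] using this
    simp_rw [hy]
    rw [← Finset.mul_sum]
    congr 1
    unfold condEntropy
    rw [neg_neg]
    exact Finset.sum_comm
  -- T2: the (1-p) * logb (1-p) part equals T1 by the flip bijection
  have hT2 : ∀ y : 𝒴, ∑ u : Fin N → Bool,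
      prefixProb P i u y * ((1 - condProb P i u y) * Real.logb 2 (1 - condProb P i u y))
        = ∑ u : Fin N → Bool,
          prefixProb P i u y * (condProb P i u y * Real.logb 2 (condProb P i u y)) := by
    intro y
    have hq : ∀ u : Fin N → Bool,
        1 - condProb P i u y = condProb P i (Function.update u i (!(u i))) y := by
      intro u
      have := condProb_flip_sum P i u y hP0
      linarith
    simp_rw [hq]
    apply Fintype.sum_bijective _ ((flip_involutive i).bijective)
    intro u
    have h1 : prefixProb P i (Function.update u i (!(u i))) y = prefixProb P i u y :=
      prefixProb_flip P i u y
    rw [h1]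
  have hT2' : ∑ u : Fin N → Bool, ∑ y : 𝒴,
      prefixProb P i u y * ((1 - condProb P i u y) * Real.logb 2 (1 - condProb P i u y))
        = 2 ^ (N - 1 - (i : ℕ)) * (- condEntropy P i) := by
    rw [Finset.sum_comm, Finset.sum_congr rfl (fun y _ => hT2 y), ← Finset.sum_comm, hT1]
  rw [hT1, hT2']
  have hpow : (2:ℝ) ^ (N - (i : ℕ)) = 2 * 2 ^ (N - 1 - (i : ℕ)) := by
    rw [← pow_succ']
    congr 1
    have := i.isLt
    omega
  rw [hpow]
  ring

lemma step_bound (hP0 : ∀ p, 0 ≤ P p) (hP1 : ∑ p : (Fin N → Bool) × 𝒴, P p = 1)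
    (S : Finset (Fin N)) (hiS : i ∉ S) (hS : ∀ j ∈ S, i < j) :
    (1/2) * ∑ u : Fin N → Bool, ∑ y : 𝒴, |Qdist P (insert i S) u y - Qdist P S u y|
      ≤ Real.sqrt ((Real.log 2 / 2) * (1 - condEntropy P i)) := by
  have hlog2 : (0:ℝ) < Real.log 2 := Real.log_pos (by norm_num)
  set c : ℝ := Real.log 2 / 2 with hc
  set dfun : (Fin N → Bool) → 𝒴 → ℝ :=
    fun u y => 1 - binEntropy (condProb P i u y) / Real.log 2 with hdfun
  -- pointwise Pinsker
  have hcd : ∀ (u : Fin N → Bool) (y : 𝒴),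
      (condProb P i u y - 1/2)^2 ≤ c * dfun u y := by
    intro u y
    have hp := pinsker_pt (condProb P i u y) (condProb_nonneg P i u y hP0)
      (condProb_le_one P i u y hP0)
    have heq : c * dfun u y = (Real.log 2 - binEntropy (condProb P i u y)) / 2 := by
      simp only [hc, hdfun]
      field_simp
    rw [heq]
    linarith
  have hcd0 : ∀ (u : Fin N → Bool) (y : 𝒴), 0 ≤ c * dfun u y :=
    fun u y => le_trans (sq_nonneg _) (hcd u y)
  have hpin : ∀ (u : Fin N → Bool) (y : 𝒴),
      |1/2 - condProb P i u y| ≤ Real.sqrt (c * dfun u y) := by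
    intro u y
    have h1 : |1/2 - condProb P i u y|
        = Real.sqrt ((condProb P i u y - 1/2)^2) := by
      rw [Real.sqrt_sq_eq_abs, abs_sub_comm]
    rw [h1]
    exact Real.sqrt_le_sqrt (hcd u y)
  -- pointwise formula for |ΔQ|
  have hPy0 : ∀ y : 𝒴, 0 ≤ ∑ v : Fin N → Bool, P (v, y) :=
    fun y => Finset.sum_nonneg fun v _ => hP0 _
  have hPe0 : ∀ (u : Fin N → Bool) (y : 𝒴),
      0 ≤ ∏ j ∈ Finset.univ.erase i, (if j ∈ S then (1:ℝ)/2 else condProb P j u y) := by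
    intro u y
    apply Finset.prod_nonneg
    intro j _
    split_ifs
    · norm_num
    · exact condProb_nonneg P j u y hP0
  have habs : ∀ (u : Fin N → Bool) (y : 𝒴),
      |Qdist P (insert i S) u y - Qdist P S u y|
        = (∑ v : Fin N → Bool, P (v, y))
          * ((∏ j ∈ Finset.univ.erase i, (if j ∈ S then (1:ℝ)/2 else condProb P j u y))
            * |1/2 - condProb P i u y|) := by
    intro u y
    unfold Qdist
    rw [← Finset.mul_prod_erase Finset.univ _ (Finset.mem_univ i),
      ← Finset.mul_prod_erase Finset.univ
        (fun j => if j ∈ S then (1:ℝ)/2 else condProb P j u y) (Finset.mem_univ i)]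
    have hei : ∏ j ∈ Finset.univ.erase i,
        (if j ∈ insert i S then (1:ℝ)/2 else condProb P j u y)
          = ∏ j ∈ Finset.univ.erase i, (if j ∈ S then (1:ℝ)/2 else condProb P j u y) := by
      apply Finset.prod_congr rfl
      intro j hj
      have hjne : j ≠ i := (Finset.mem_erase.mp hj).1
      congr 1
      simp [Finset.mem_insert, hjne]
    rw [hei, if_pos (Finset.mem_insert_self i S), if_neg hiS]
    rw [← mul_sub, ← sub_mul, abs_mul, abs_mul, abs_of_nonneg (hPy0 y),
      abs_of_nonneg (hPe0 u y)]
    ring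
  -- collapse the tail
  set M : ℝ := ∑ u : Fin N → Bool, ∑ y : 𝒴,
    prefixProb P i u y * |1/2 - condProb P i u y| with hMdef
  have hM : M = 2 ^ (N - 1 - (i:ℕ))
      * ∑ u : Fin N → Bool, ∑ y : 𝒴, |Qdist P (insert i S) u y - Qdist P S u y| := by
    rw [hMdef, Finset.sum_comm]
    conv_rhs => rw [Finset.sum_comm]
    have hy : ∀ y : 𝒴,
        ∑ u : Fin N → Bool, prefixProb P i u y * |1/2 - condProb P i u y|
          = 2 ^ (N - 1 - (i:ℕ))
            * ∑ u : Fin N → Bool, |Qdist P (insert i S) u y - Qdist P S u y| := by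
      intro y
      have hchain : ∀ u : Fin N → Bool,
          prefixProb P i u y * |1/2 - condProb P i u y|
            = (∑ v : Fin N → Bool, P (v, y))
              * ((∏ j ∈ Finset.Iio i, condProb P j u y) * |1/2 - condProb P i u y|) := by
        intro u
        rw [chain P u y hP0 (i:ℕ) i rfl]
        ring
      simp_rw [hchain]
      rw [← Finset.mul_sum]
      have hcol := collapse P i y hP0 S hS (fun u => |1/2 - condProb P i u y|)
        (fun u v h => by
          show |1/2 - condProb P i u y| = |1/2 - condProb P i v y|
          rw [condProb_congr P i u y h])
      rw [hcol]
      simp_rw [habs]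
      rw [← Finset.mul_sum]
      ring
    rw [Finset.sum_congr rfl (fun y _ => hy y), ← Finset.mul_sum]
  -- M ≤ weighted sum of sqrts
  set M' : ℝ := ∑ u : Fin N → Bool, ∑ y : 𝒴,
    prefixProb P i u y * Real.sqrt (c * dfun u y) with hM'def
  have hMM' : M ≤ M' := by
    apply Finset.sum_le_sum
    intro u _
    apply Finset.sum_le_sum
    intro y _
    exact mul_le_mul_of_nonneg_left (hpin u y) (prefixProb_nonneg P i u y hP0)
  -- Cauchy-Schwarz
  have hCS : M'^2 ≤ (2:ℝ)^(N - (i:ℕ)) * ((2:ℝ)^(N - (i:ℕ)) * (c * (1 - condEntropy P i))) := by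
    have hM'p : M' = ∑ x : (Fin N → Bool) × 𝒴,
        prefixProb P i x.1 x.2 * Real.sqrt (c * dfun x.1 x.2) := by
      rw [hM'def, Fintype.sum_prod_type]
    have hw : ∑ x : (Fin N → Bool) × 𝒴, prefixProb P i x.1 x.2 = 2 ^ (N - (i:ℕ)) := by
      rw [Fintype.sum_prod_type]
      exact weight_total P i hP1
    have hwd : ∑ x : (Fin N → Bool) × 𝒴, prefixProb P i x.1 x.2 * (c * dfun x.1 x.2)
        = c * ((2:ℝ)^(N - (i:ℕ)) * (1 - condEntropy P i)) := by
      have : ∀ x : (Fin N → Bool) × 𝒴,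
          prefixProb P i x.1 x.2 * (c * dfun x.1 x.2)
            = c * (prefixProb P i x.1 x.2 * dfun x.1 x.2) := fun x => by ring
      simp_rw [this, ← Finset.mul_sum]
      congr 1
      rw [Fintype.sum_prod_type]
      exact entropy_id P i hP0 hP1
    have hcs := Finset.sum_sq_le_sum_mul_sum_of_sq_eq_mul Finset.univ
      (r := fun x : (Fin N → Bool) × 𝒴 => prefixProb P i x.1 x.2 * Real.sqrt (c * dfun x.1 x.2))
      (f := fun x : (Fin N → Bool) × 𝒴 => prefixProb P i x.1 x.2)
      (g := fun x : (Fin N → Bool) × 𝒴 => prefixProb P i x.1 x.2 * (c * dfun x.1 x.2))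
      (fun x _ => prefixProb_nonneg P i x.1 x.2 hP0)
      (fun x _ => mul_nonneg (prefixProb_nonneg P i x.1 x.2 hP0) (hcd0 x.1 x.2))
      (fun x _ => by
        rw [mul_pow, Real.sq_sqrt (hcd0 x.1 x.2)]
        ring)
    rw [hw, hwd] at hcs
    rw [hM'p]
    calc (∑ x : (Fin N → Bool) × 𝒴,
        prefixProb P i x.1 x.2 * Real.sqrt (c * dfun x.1 x.2))^2
        ≤ (2:ℝ)^(N - (i:ℕ)) * (c * ((2:ℝ)^(N - (i:ℕ)) * (1 - condEntropy P i))) := hcs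
      _ = (2:ℝ)^(N - (i:ℕ)) * ((2:ℝ)^(N - (i:ℕ)) * (c * (1 - condEntropy P i))) := by ring
  have hM'0 : 0 ≤ M' := by
    apply Finset.sum_nonneg
    intro u _
    apply Finset.sum_nonneg
    intro y _
    exact mul_nonneg (prefixProb_nonneg P i u y hP0) (Real.sqrt_nonneg _)
  have hM'le : M' ≤ (2:ℝ)^(N - (i:ℕ)) * Real.sqrt (c * (1 - condEntropy P i)) := by
    have h1 := Real.sqrt_le_sqrt hCS
    rw [Real.sqrt_sq hM'0] at h1
    have h2 : Real.sqrt ((2:ℝ)^(N - (i:ℕ))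
          * ((2:ℝ)^(N - (i:ℕ)) * (c * (1 - condEntropy P i))))
        = (2:ℝ)^(N - (i:ℕ)) * Real.sqrt (c * (1 - condEntropy P i)) := by
      rw [← mul_assoc, ← pow_two]
      rw [Real.sqrt_mul (by positivity)]
      congr 1
      rw [Real.sqrt_sq (by positivity)]
    rwa [h2] at h1
  -- conclude
  have hpow : (2:ℝ) ^ (N - (i:ℕ)) = 2 * 2 ^ (N - 1 - (i:ℕ)) := by
    rw [← pow_succ']
    congr 1
    have := i.isLt
    omega
  have hpos : (0:ℝ) < 2 ^ (N - 1 - (i:ℕ)) := by positivity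
  rw [← mul_le_mul_iff_right₀ hpos]
  calc (2:ℝ) ^ (N - 1 - (i:ℕ))
      * ((1/2) * ∑ u : Fin N → Bool, ∑ y : 𝒴, |Qdist P (insert i S) u y - Qdist P S u y|)
      = (1/2) * M := by rw [hM]; ring
    _ ≤ (1/2) * M' := by linarith
    _ ≤ (1/2) * ((2:ℝ)^(N - (i:ℕ)) * Real.sqrt (c * (1 - condEntropy P i))) := by linarith
    _ = 2 ^ (N - 1 - (i:ℕ)) * Real.sqrt (c * (1 - condEntropy P i)) := by
        rw [hpow]; ring

/-- the total variation distance between `P` and the distribution `Q`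
obtained by freezing the conditionals at the indices in `F` to `1/2` is bounded by
`∑_{i∈F} √((ln 2 / 2)·(1 − H(U_i | U_{1:i−1}, Y)))`. -/
theorem stmt11 [Nonempty 𝒴] (hN : 1 ≤ N)
    (P : (Fin N → Bool) × 𝒴 → ℝ)
    (hP0 : ∀ p, 0 ≤ P p) (hP1 : ∑ p : (Fin N → Bool) × 𝒴, P p = 1)
    (F : Finset (Fin N)) :
    (1 / 2) * ∑ u : Fin N → Bool, ∑ y : 𝒴, |P (u, y) - Qdist P F u y|
      ≤ ∑ i ∈ F, Real.sqrt ((Real.log 2 / 2) * (1 - condEntropy P i)) := by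
  classical
  set Sk : ℕ → Finset (Fin N) := fun k => F.filter (fun j => k ≤ (j : ℕ)) with hSk
  have hS0 : Sk 0 = F := by
    simp [hSk]
  have hSN : Sk N = ∅ := by
    ext j
    simp only [hSk, Finset.mem_filter, Finset.notMem_empty, iff_false, not_and, not_le]
    intro _
    exact j.isLt
  have hQP : ∀ (u : Fin N → Bool) (y : 𝒴), Qdist P (Sk N) u y = P (u, y) := by
    intro u y
    rw [hSN]
    exact Qdist_empty P u y hN hP0
  have htel : ∀ (u : Fin N → Bool) (y : 𝒴),
      |P (u, y) - Qdist P F u y|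
        ≤ ∑ k ∈ Finset.range N, |Qdist P (Sk k) u y - Qdist P (Sk (k+1)) u y| := by
    intro u y
    have := dist_le_range_sum_dist (fun k => Qdist P (Sk k) u y) N
    simp only [Real.dist_eq] at this
    calc |P (u, y) - Qdist P F u y|
        = |Qdist P (Sk 0) u y - Qdist P (Sk N) u y| := by
          rw [hS0, hQP u y, abs_sub_comm]
      _ ≤ ∑ k ∈ Finset.range N, |Qdist P (Sk k) u y - Qdist P (Sk (k+1)) u y| := this
  set T : ℕ → ℝ := fun k =>
    ∑ j ∈ F.filter (fun j : Fin N => (j : ℕ) = k),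
      Real.sqrt ((Real.log 2 / 2) * (1 - condEntropy P j)) with hT
  have hstep : ∀ k ∈ Finset.range N,
      (1/2) * (∑ u : Fin N → Bool, ∑ y : 𝒴,
        |Qdist P (Sk k) u y - Qdist P (Sk (k+1)) u y|) ≤ T k := by
    intro k hk
    rw [Finset.mem_range] at hk
    set i : Fin N := ⟨k, hk⟩ with hidef
    by_cases hiF : i ∈ F
    · have hins : Sk k = insert i (Sk (k+1)) := by
        ext j
        simp only [hSk, Finset.mem_filter, Finset.mem_insert]
        constructor
        · rintro ⟨hj1, hj2⟩
          by_cases hji : (j : ℕ) = k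
          · exact Or.inl (by rw [Fin.ext_iff]; simpa [hidef] using hji)
          · exact Or.inr ⟨hj1, by omega⟩
        · rintro (rfl | ⟨hj1, hj2⟩)
          · exact ⟨hiF, by simp [hidef]⟩
          · exact ⟨hj1, by omega⟩
      have hnm : i ∉ Sk (k+1) := by
        simp [hSk, hidef]
      have hgt : ∀ j ∈ Sk (k+1), i < j := by
        intro j hj
        simp only [hSk, Finset.mem_filter] at hj
        rw [Fin.lt_def]
        simp only [hidef]
        omega
      have hfil : F.filter (fun j : Fin N => (j : ℕ) = k) = {i} := by
        ext j
        simp only [Finset.mem_filter, Finset.mem_singleton]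
        constructor
        · rintro ⟨hj1, hj2⟩
          rw [Fin.ext_iff]
          simpa [hidef] using hj2
        · rintro rfl
          exact ⟨hiF, by simp [hidef]⟩
      have := step_bound P i hP0 hP1 (Sk (k+1)) hnm hgt
      rw [← hins] at this
      simp only [hT, hfil, Finset.sum_singleton]
      exact this
    · have heq : Sk k = Sk (k+1) := by
        ext j
        simp only [hSk, Finset.mem_filter]
        constructor
        · rintro ⟨hj1, hj2⟩
          refine ⟨hj1, ?_⟩
          by_cases hji : (j : ℕ) = k
          · exact absurd (show j = i by rw [Fin.ext_iff]; simpa [hidef] using hji)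
              (fun hc => hiF (hc ▸ hj1))
          · omega
        · rintro ⟨hj1, hj2⟩
          exact ⟨hj1, by omega⟩
      have hfil : F.filter (fun j : Fin N => (j : ℕ) = k) = ∅ := by
        ext j
        simp only [Finset.mem_filter, Finset.notMem_empty, iff_false, not_and]
        intro hj1 hj2
        have hji : j = i := by rw [Fin.ext_iff]; simpa [hidef] using hj2
        exact hiF (hji ▸ hj1)
      simp only [hT, hfil, Finset.sum_empty, heq, sub_self, abs_zero,
        Finset.sum_const_zero, mul_zero, le_refl]
  calc (1 / 2) * ∑ u : Fin N → Bool, ∑ y : 𝒴, |P (u, y) - Qdist P F u y|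
      ≤ (1 / 2) * ∑ u : Fin N → Bool, ∑ y : 𝒴,
          ∑ k ∈ Finset.range N, |Qdist P (Sk k) u y - Qdist P (Sk (k+1)) u y| := by
        apply mul_le_mul_of_nonneg_left _ (by norm_num)
        apply Finset.sum_le_sum
        intro u _
        apply Finset.sum_le_sum
        intro y _
        exact htel u y
    _ = ∑ k ∈ Finset.range N, (1/2) * (∑ u : Fin N → Bool, ∑ y : 𝒴,
          |Qdist P (Sk k) u y - Qdist P (Sk (k+1)) u y|) := by
        have h1 : ∀ u : Fin N → Bool, ∑ y : 𝒴,
            ∑ k ∈ Finset.range N, |Qdist P (Sk k) u y - Qdist P (Sk (k+1)) u y|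
              = ∑ k ∈ Finset.range N, ∑ y : 𝒴,
                |Qdist P (Sk k) u y - Qdist P (Sk (k+1)) u y| := fun u => Finset.sum_comm
        simp_rw [h1]
        rw [Finset.sum_comm, Finset.mul_sum]
    _ ≤ ∑ k ∈ Finset.range N, T k := Finset.sum_le_sum hstep
    _ = ∑ i ∈ F, Real.sqrt ((Real.log 2 / 2) * (1 - condEntropy P i)) := by
        simp only [hT]
        exact Finset.sum_fiberwise_of_maps_to (fun i hi => Finset.mem_range.mpr i.isLt) _


end
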